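/- For every variable z and all terms M, N in Λ↑: M =α N if and only if db_z(M) = db_z(N). -/
import Mathlib


/-- Terms of Λ↑: variables, application, named abstraction, explicit weakening. -/
inductive Tm : Type
  | var : ℕ → Tm
  | app : Tm → Tm → Tm
  | lam : ℕ → Tm → Tm
  | up  : Tm → Tm

/-- Renaming functions: `swap y x` is `{yx}`, `lift F x` is `F_x`. -/
inductive Ren : Type
  | swap : ℕ → ℕ → Ren
  | lift : Ren → ℕ → Ren

/-- Action of a renaming function on a term. -/
def Ren.apply : Ren → Tm → Tm
  | F, .app M N => .app (F.apply M) (F.apply N)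
  | F, .lam x M => .lam x ((F.lift x).apply M)
  | .lift F _, .up M => .up (F.apply M)
  | .lift F x, .var z => if z = x then .var x else .up (F.apply (.var z))
  | .swap _ _, .up M => .up M
  | .swap y x, .var z => if z = x then .var y else .up (.var z)
termination_by F M => (sizeOf M, sizeOf F)

/-- Iterated lifting `F_Γ` for a context `Γ = y₁,…,yₙ` (the list `[y₁,…,yₙ]`):
lift by `y₁` first, then `y₂`, …, then `yₙ`. -/
def Ren.liftCtx (F : Ren) (Γ : List ℕ) : Ren := Γ.foldl Ren.lift F

/-- Alpha-conversion: smallest compatible equivalence with `λx M =α λy {yx}M`. -/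
inductive Alpha : Tm → Tm → Prop
  | refl (M) : Alpha M M
  | symm {M N} : Alpha M N → Alpha N M
  | trans {M N P} : Alpha M N → Alpha N P → Alpha M P
  | app {M₁ M₂ N₁ N₂} : Alpha M₁ M₂ → Alpha N₁ N₂ → Alpha (.app M₁ N₁) (.app M₂ N₂)
  | lam {M₁ M₂} (x) : Alpha M₁ M₂ → Alpha (.lam x M₁) (.lam x M₂)
  | up {M₁ M₂} : Alpha M₁ M₂ → Alpha (.up M₁) (.up M₂)
  | rename (x y M) : Alpha (.lam x M) (.lam y ((Ren.swap y x).apply M))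

/-- de Bruijn normalisation `db_z : Λ↑ → Λ↑`. -/
def db (z : ℕ) : Tm → Tm
  | .var x => .var x
  | .up M => .up (db z M)
  | .app M N => .app (db z M) (db z N)
  | .lam x M => .lam z ((Ren.swap z x).apply (db z M))
/-- Derivations of judgments `Γ ⊢ M`.  A context `Γ = y₁,…,yₙ` is the list
`[y₁,…,yₙ]` and `Γ,x` is `Γ ++ [x]`. -/
inductive Der : List ℕ → Tm → Type
  | varNil (x : ℕ) : Der [] (.var x)
  | varHere (Γ : List ℕ) (x : ℕ) : Der (Γ ++ [x]) (.var x)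
  | varThere {Γ : List ℕ} {x : ℕ} (z : ℕ) : z ≠ x → Der Γ (.var x) → Der (Γ ++ [z]) (.var x)
  | app {Γ M N} : Der Γ M → Der Γ N → Der Γ (.app M N)
  | upNil {M} : Der [] M → Der [] (.up M)
  | upCons {Γ M} (x : ℕ) : Der Γ M → Der (Γ ++ [x]) (.up M)
  | lam {Γ M} (x : ℕ) : Der (Γ ++ [x]) M → Der Γ (.lam x M)

/-- Generalized de Bruijn terms. -/
inductive Db : Type
  | var : ℕ → Db
  | one : Db
  | app : Db → Db → Db
  | lam : Db → Db
  | up  : Db → Db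

/-- Auxiliary translation, with the context given in *reversed* order
(head of the list is the last variable of the context). -/
def transAux : List ℕ → Tm → Db
  | Γ, .app M N => .app (transAux Γ M) (transAux Γ N)
  | Γ, .lam x M => .lam (transAux (x :: Γ) M)
  | [], .var x => .var x
  | y :: Γ, .var x => if y = x then .one else .up (transAux Γ (.var x))
  | [], .up M => .up (transAux [] M)
  | _ :: Γ, .up M => .up (transAux Γ M)
termination_by Γ M => (sizeOf M, Γ.length)

/-- The translation `‖Γ ⊢ M‖`, with `Γ = y₁,…,yₙ` given as the list `[y₁,…,yₙ]`. -/
def transl (Γ : List ℕ) (M : Tm) : Db := transAux Γ.reverse M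

/-- The map `db_z` from generalized de Bruijn terms back to `Λ↑`. -/
def dbD (z : ℕ) : Db → Tm
  | .var x => .var x
  | .one => .var z
  | .lam A => .lam z (dbD z A)
  | .app A B => .app (dbD z A) (dbD z B)
  | .up A => .up (dbD z A)

/-- The function `{z/Γ}`, with `Γ = y₁,…,yₙ` given as the list `[y₁,…,yₙ]`:
`{z/nil}M = M` and `{z/x,Δ}M = {z/Δ}({zx}_Δ M)`. -/
def subAll (z : ℕ) : List ℕ → Tm → Tm
  | [], M => M
  | x :: Δ, M => subAll z Δ (((Ren.swap z x).liftCtx Δ).apply M)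

lemma apply_app (F : Ren) (M N : Tm) : F.apply (.app M N) = .app (F.apply M) (F.apply N) := by
  cases F <;> simp [Ren.apply]

lemma apply_lam (F : Ren) (x : ℕ) (M : Tm) : F.apply (.lam x M) = .lam x ((F.lift x).apply M) := by
  cases F <;> simp [Ren.apply]

lemma lift_up (F : Ren) (x : ℕ) (M : Tm) : (Ren.lift F x).apply (.up M) = .up (F.apply M) := by
  simp [Ren.apply]

lemma lift_var (F : Ren) (x v : ℕ) :
    (Ren.lift F x).apply (.var v) = if v = x then .var x else .up (F.apply (.var v)) := by
  simp [Ren.apply]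

lemma swap_up (y x : ℕ) (M : Tm) : (Ren.swap y x).apply (.up M) = .up M := by
  simp [Ren.apply]

lemma swap_var (y x v : ℕ) :
    (Ren.swap y x).apply (.var v) = if v = x then .var y else .up (.var v) := by
  simp [Ren.apply]

lemma trans_app (Γ : List ℕ) (M N : Tm) :
    transAux Γ (.app M N) = .app (transAux Γ M) (transAux Γ N) := by
  cases Γ <;> simp [transAux]

lemma trans_lam (Γ : List ℕ) (x : ℕ) (M : Tm) :
    transAux Γ (.lam x M) = .lam (transAux (x :: Γ) M) := by
  cases Γ <;> simp [transAux]

lemma trans_var_nil (x : ℕ) : transAux [] (.var x) = .var x := by simp [transAux]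

lemma trans_var_cons (y : ℕ) (Γ : List ℕ) (x : ℕ) :
    transAux (y :: Γ) (.var x) = if y = x then .one else .up (transAux Γ (.var x)) := by
  simp [transAux]

lemma trans_up_nil (M : Tm) : transAux [] (.up M) = .up (transAux [] M) := by simp [transAux]

lemma trans_up_cons (y : ℕ) (Γ : List ℕ) (M : Tm) :
    transAux (y :: Γ) (.up M) = .up (transAux Γ M) := by
  simp [transAux]

/-- Lifting by a list, head = innermost lift. -/
def liftRev (F : Ren) : List ℕ → Ren
  | [] => F
  | w :: E => (liftRev F E).lift w

lemma liftRev_eq_liftCtx (F : Ren) (E : List ℕ) : liftRev F E = F.liftCtx E.reverse := by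
  induction E with
  | nil => rfl
  | cons w E ih => simp [liftRev, ih, Ren.liftCtx, List.foldl_append]

/-- `subAll` with the context reversed (head = innermost). -/
def subAllR (z : ℕ) (E : List ℕ) (t : Tm) : Tm := subAll z E.reverse t

lemma subAllR_nil (z : ℕ) (t : Tm) : subAllR z [] t = t := rfl

lemma subAllR_snoc (z : ℕ) (E : List ℕ) (x : ℕ) (t : Tm) :
    subAllR z (E ++ [x]) t = subAllR z E ((liftRev (Ren.swap z x) E).apply t) := by
  simp [subAllR, subAll, liftRev_eq_liftCtx]

/-- Key commutation lemma. -/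
lemma cm (u : Tm) : ∀ (E : List ℕ) (H : Ren) (z w : ℕ),
    (liftRev (H.lift z) E).apply ((liftRev (Ren.swap z w) E).apply u)
      = (liftRev (Ren.swap z w) E).apply ((liftRev (H.lift w) E).apply u) := by
  induction u with
  | var v =>
    intro E
    induction E with
    | nil =>
      intro H z w
      by_cases hv : v = w <;> simp [liftRev, swap_var, lift_var, lift_up, swap_up, hv]
    | cons b E ih =>
      intro H z w
      by_cases hv : v = b <;> simp [liftRev, lift_var, lift_up, hv, ih]
  | app P Q ihP ihQ =>
    intro E H z w
    simp [apply_app, ihP, ihQ]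
  | lam a P ih =>
    intro E H z w
    have := ih (a :: E) H z w
    simp [apply_lam, liftRev] at this ⊢
    exact this
  | up P ih =>
    intro E H z w
    cases E with
    | nil => simp [liftRev, swap_up, lift_up]
    | cons b E => simp [liftRev, lift_up, ih]

lemma subAllR_single (z w : ℕ) (t : Tm) : subAllR z [w] t = (Ren.swap z w).apply t := rfl

lemma p6 (z : ℕ) (E : List ℕ) : ∀ s t : Tm,
    subAllR z E (.app s t) = .app (subAllR z E s) (subAllR z E t) := by
  induction E using List.reverseRecOn with
  | nil => intro s t; simp [subAllR_nil]
  | append_singleton E x ih => intro s t; simp [subAllR_snoc, apply_app, ih]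

lemma p4 (z w : ℕ) (E : List ℕ) : ∀ t : Tm,
    subAllR z (w :: E) (.up t) = .up (subAllR z E t) := by
  induction E using List.reverseRecOn with
  | nil => intro t; rw [subAllR_single, swap_up, subAllR_nil]
  | append_singleton E x ih =>
    intro t
    have h1 : w :: (E ++ [x]) = (w :: E) ++ [x] := by simp
    rw [h1, subAllR_snoc, subAllR_snoc]
    simp [liftRev, lift_up, ih]

lemma p5 (z w v : ℕ) (E : List ℕ) :
    subAllR z (w :: E) (.var v) = if w = v then .var z else .up (subAllR z E (.var v)) := by
  induction E using List.reverseRecOn with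
  | nil =>
    rw [subAllR_single, swap_var]
    by_cases hv : v = w
    · subst hv; simp
    · simp [hv, Ne.symm hv, subAllR_nil]
  | append_singleton E x ih =>
    have h1 : w :: (E ++ [x]) = (w :: E) ++ [x] := by simp
    rw [h1, subAllR_snoc]
    by_cases hv : v = w
    · subst hv
      simp [liftRev, lift_var, ih]
    · rw [show liftRev (Ren.swap z x) (w :: E) = (liftRev (Ren.swap z x) E).lift w from rfl,
        lift_var]
      simp only [hv, if_false]
      rw [p4, subAllR_snoc]
      simp [Ne.symm hv]

lemma p3 (z w : ℕ) (E : List ℕ) : ∀ u : Tm,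
    subAllR z E (.lam z ((Ren.swap z w).apply u)) = .lam z (subAllR z (w :: E) u) := by
  induction E using List.reverseRecOn with
  | nil =>
    intro u
    rw [subAllR_nil, subAllR_single]
  | append_singleton E x ih =>
    intro u
    rw [subAllR_snoc, apply_lam]
    have hc := cm u [] (liftRev (Ren.swap z x) E) z w
    simp only [liftRev] at hc
    rw [hc, ih]
    have h1 : w :: (E ++ [x]) = (w :: E) ++ [x] := by simp
    rw [h1, subAllR_snoc]
    rfl

/-- Bridge: `dbD z (transAux E M) = subAllR z E (db z M)`. -/
lemma bridge (z : ℕ) (M : Tm) : ∀ E : List ℕ,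
    dbD z (transAux E M) = subAllR z E (db z M) := by
  induction M with
  | var v =>
    intro E
    induction E with
    | nil => simp [trans_var_nil, dbD, db, subAllR_nil]
    | cons w E ih =>
      rw [trans_var_cons, show db z (.var v) = .var v from rfl, p5]
      by_cases hv : w = v <;> simp [hv, dbD, ih, db]
  | app P Q ihP ihQ =>
    intro E
    simp [trans_app, dbD, db, p6, ihP, ihQ]
  | lam w P ih =>
    intro E
    rw [trans_lam]
    show Tm.lam z (dbD z (transAux (w :: E) P)) = _
    rw [ih (w :: E), show db z (.lam w P) = .lam z ((Ren.swap z w).apply (db z P)) from rfl, p3]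
  | up P ih =>
    intro E
    cases E with
    | nil => simp [trans_up_nil, dbD, db, subAllR_nil, ih]
    | cons w E => simp [trans_up_cons, dbD, db, p4, ih]

/-- Translation is invariant under the renaming in the α-rule. -/
lemma tlem (x y : ℕ) (M : Tm) : ∀ (E Γ : List ℕ),
    transAux (E ++ y :: Γ) ((liftRev (Ren.swap y x) E).apply M)
      = transAux (E ++ x :: Γ) M := by
  induction M with
  | var v =>
    intro E
    induction E with
    | nil =>
      intro Γ
      simp only [List.nil_append, liftRev, swap_var]
      by_cases hv : v = x
      · subst hv; simp [trans_var_cons]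
      · simp [hv, trans_var_cons, trans_up_cons, Ne.symm hv]
    | cons w E ih =>
      intro Γ
      simp only [List.cons_append, liftRev, lift_var]
      by_cases hv : v = w
      · subst hv; simp [trans_var_cons]
      · simp [hv, trans_var_cons, trans_up_cons, Ne.symm hv, ih]
  | app P Q ihP ihQ => intro E Γ; simp [apply_app, trans_app, ihP, ihQ]
  | lam a P ih =>
    intro E Γ
    rw [apply_lam, trans_lam, trans_lam]
    have := ih (a :: E) Γ
    simp only [List.cons_append, liftRev] at this
    rw [this]
  | up P ih =>
    intro E Γ
    cases E with
    | nil => simp [liftRev, swap_up, trans_up_cons]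
    | cons w E =>
      simp only [List.cons_append, liftRev, lift_up, trans_up_cons]
      exact congrArg Db.up (ih E Γ)

lemma alpha_transAux {M N : Tm} (h : Alpha M N) : ∀ E : List ℕ, transAux E M = transAux E N := by
  induction h with
  | refl M => intro E; rfl
  | symm _ ih => intro E; exact (ih E).symm
  | trans _ _ ih1 ih2 => intro E; exact (ih1 E).trans (ih2 E)
  | app _ _ ih1 ih2 => intro E; simp [trans_app, ih1, ih2]
  | lam x _ ih => intro E; simp [trans_lam, ih]
  | up _ ih => intro E; cases E <;> simp [trans_up_nil, trans_up_cons, ih]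
  | rename x y M =>
    intro E
    rw [trans_lam, trans_lam]
    have := tlem x y M [] E
    simp only [List.nil_append, liftRev] at this
    rw [this]

lemma alpha_db (z : ℕ) : ∀ M : Tm, Alpha M (db z M) := by
  intro M
  induction M with
  | var v => exact Alpha.refl _
  | app P Q ihP ihQ => exact Alpha.app ihP ihQ
  | up P ih => exact Alpha.up ih
  | lam x P ih => exact Alpha.trans (Alpha.lam x ih) (Alpha.rename x z (db z P))

lemma db_eq_dbD (z : ℕ) (M : Tm) : db z M = dbD z (transAux [] M) := by
  rw [bridge z M [], subAllR_nil]

/-- `M =α N` iff `db_z(M) = db_z(N)`. -/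
theorem stmt9 (z : ℕ) (M N : Tm) : Alpha M N ↔ db z M = db z N := by
  constructor
  · intro h
    rw [db_eq_dbD, db_eq_dbD, alpha_transAux h []]
  · intro h
    exact Alpha.trans (alpha_db z M) (h ▸ (alpha_db z N).symm)
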